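/- (Necessity of the Euclidean distance profile for variance minimality) Let m₁ ≥ m₂ ≥ 1 be natural numbers, N = m₁ + m₂, ℓ = ⌊N/m₂⌋ and u = ⌈N/m₂⌉. Suppose C : ZMod N → {a₁, a₂} is an admissible cycle (fibers of sizes m₁ and m₂) that minimizes the variance among all admissible cycles, i.e., σ²(C) ≤ σ²(C') for every admissible C'. Then: every instance of a₁ has Δ_C(j) ∈ {1, 2}, with exactly m₁ − m₂ instances having Δ_C(j) = 1 and exactly m₂ having Δ_C(j) = 2; and every instance of a₂ has Δ_C(j) ∈ {ℓ, u}. In particular, the less abundant symbol a₂ is unclustered in any variance-minimizing admissible binary cycle. -/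

import Mathlib

open Finset

/-- The distance from position `j` to the next occurrence of the same symbol:
the least positive `d` with `C (j + d) = C j`. -/
noncomputable def cycleDist {N : ℕ} {A : Type*} (C : ZMod N → A) (j : ZMod N) : ℕ :=
  sInf {d : ℕ | 0 < d ∧ C (j + (d : ZMod N)) = C j}

/-- A cycle is admissible for multiplicities `m` if every fiber has the prescribed size. -/
def Admissible {N : ℕ} [NeZero N] {A : Type*} [Fintype A] [DecidableEq A]
    (m : A → ℕ) (C : ZMod N → A) : Prop :=
  ∀ a : A, (Finset.univ.filter (fun j => C j = a)).card = m a

/-- The mean of a cycle. -/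
noncomputable def cycleMean {N : ℕ} [NeZero N] {A : Type*} (C : ZMod N → A) : ℚ :=
  (∑ j : ZMod N, (cycleDist C j : ℚ)) / N

/-- The second (raw) moment of a cycle. -/
noncomputable def cycleMoment2 {N : ℕ} [NeZero N] {A : Type*} (C : ZMod N → A) : ℚ :=
  (∑ j : ZMod N, (cycleDist C j : ℚ) ^ 2) / N

/-- The variance of a cycle. -/
noncomputable def cycleVariance {N : ℕ} [NeZero N] {A : Type*} (C : ZMod N → A) : ℚ :=
  (∑ j : ZMod N, ((cycleDist C j : ℚ) - cycleMean C) ^ 2) / N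

/-!
Every symbol occurs, so the distances along each fiber add up to `N`: every admissible cycle has
mean `|A|`, and minimizing the variance means minimizing `∑ Δ²`. Choosing a level `a s` for each
symbol, `Δ² = (Δ - a)(Δ - a - 1) + ((2a + 1)Δ - a(a + 1))`; the second part sums to the same
constant over all admissible cycles, and the first is nonnegative, vanishing exactly when
`Δ ∈ {a, a + 1}`. For the levels `1` (for `a₁`) and `ℓ` (for `a₂`), the cycle with `a₂` at the
positions `i ℓ + min i r`, where `N = m₂ ℓ + r`, has zero excess, hence so does every minimizer.
The counts then follow from the fiber sums.
-/

lemma sum_eq_mul_card_add_card_filter {ι : Type*} {S : Finset ι} {d : ι → ℕ} {a : ℕ}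
    (h : ∀ i ∈ S, d i = a ∨ d i = a + 1) : ∑ i ∈ S, d i = a * #S + #{i ∈ S | d i = a + 1} := by
  rw [card_filter, mul_comm, ← smul_eq_mul, ← sum_const, ← sum_add_distrib]
  exact sum_congr rfl fun i hi => by rcases h i hi with h | h <;> simp [h]

lemma card_filter_add_card_filter_succ {ι : Type*} {S : Finset ι} {d : ι → ℕ} {a : ℕ}
    (h : ∀ i ∈ S, d i = a ∨ d i = a + 1) :
    #{i ∈ S | d i = a} + #{i ∈ S | d i = a + 1} = #S := by
  rw [← card_filter_add_card_filter_not (s := S) (d · = a)]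
  congr 1
  exact congrArg card (filter_congr fun i hi => by rcases h i hi with h | h <;> omega)

section cycleDist

variable {N : ℕ} {A : Type*} (C : ZMod N → A) (j : ZMod N)

lemma cycleDist_le {d : ℕ} (hd : 0 < d) (h : C (j + d) = C j) : cycleDist C j ≤ d :=
  Nat.sInf_le ⟨hd, h⟩

lemma apply_add_ne_of_lt_cycleDist {e : ℕ} (he : 0 < e) (h : e < cycleDist C j) :
    C (j + e) ≠ C j :=
  fun hCe => (cycleDist_le C j he hCe).not_gt h

noncomputable def cycleRun : Finset (ZMod N) :=
  (range (cycleDist C j)).image fun t : ℕ => j + t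

variable {C} in
lemma eq_of_add_eq_add_of_lt_cycleDist {j j' : ZMod N} {t t' : ℕ} (hC : C j = C j')
    (htt' : t ≤ t') (ht' : t' < cycleDist C j') (h : j + t = j' + t') : j = j' := by
  have hj : j = j' + ((t' - t : ℕ) : ZMod N) := by
    push_cast [Nat.cast_sub htt']
    linear_combination h
  rcases (t' - t).eq_zero_or_pos with h0 | hpos
  · simpa [h0] using hj
  · exact absurd (hj ▸ hC) (apply_add_ne_of_lt_cycleDist C j' hpos (by omega))

variable {C} in
lemma disjoint_cycleRun {j j' : ZMod N} (hne : j ≠ j') (hC : C j = C j') :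
    Disjoint (cycleRun C j) (cycleRun C j') := by
  simp only [Finset.disjoint_left, cycleRun, mem_image, mem_range, not_exists, not_and]
  rintro _ ⟨t, ht, rfl⟩ t' ht' h
  rcases le_total t t' with htt' | htt'
  · exact hne (eq_of_add_eq_add_of_lt_cycleDist hC htt' ht' h.symm)
  · exact hne (eq_of_add_eq_add_of_lt_cycleDist hC.symm htt' ht h).symm

variable [NeZero N]

lemma cycleDist_spec : 0 < cycleDist C j ∧ C (j + cycleDist C j) = C j :=
  Nat.sInf_mem (s := {d : ℕ | 0 < d ∧ C (j + d) = C j})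
    ⟨N, Nat.pos_of_ne_zero (NeZero.ne N), by simp⟩

lemma cycleDist_pos : 0 < cycleDist C j := (cycleDist_spec C j).1

lemma apply_add_cycleDist : C (j + cycleDist C j) = C j := (cycleDist_spec C j).2

lemma cycleDist_le_card : cycleDist C j ≤ N :=
  cycleDist_le C j (Nat.pos_of_ne_zero (NeZero.ne N)) (by simp)

lemma cycleDist_eq_of_forall_ne {d : ℕ} (hd : 0 < d) (h : C (j + d) = C j)
    (hgap : ∀ e, 0 < e → e < d → C (j + e) ≠ C j) : cycleDist C j = d :=
  (cycleDist_le C j hd h).antisymm <| not_lt.mp fun hlt =>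
    hgap _ (cycleDist_pos C j) hlt (apply_add_cycleDist C j)

lemma card_cycleRun : #(cycleRun C j) = cycleDist C j := by
  refine (card_image_of_injOn fun x hx y hy hxy => ?_).trans (card_range _)
  have hlt : ∀ t ∈ (range (cycleDist C j) : Set ℕ), t < N :=
    fun t ht => (mem_range.mp ht).trans_le (cycleDist_le_card C j)
  simpa [ZMod.val_cast_of_lt (hlt x hx), ZMod.val_cast_of_lt (hlt y hy)] using
    congrArg ZMod.val (add_left_cancel hxy)

variable {C}

lemma exists_mem_cycleRun {s : A} (hs : ∃ j, C j = s) (k : ZMod N) :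
    ∃ j, C j = s ∧ k ∈ cycleRun C j := by
  obtain ⟨j₀, hj₀⟩ := hs
  have hne : {t : ℕ | C (k - t) = s}.Nonempty := ⟨(k - j₀).val, by simpa using hj₀⟩
  set t := sInf {t : ℕ | C (k - t) = s}
  have ht : C (k - t) = s := Nat.sInf_mem hne
  refine ⟨k - t, ht, mem_image.mpr ⟨t, mem_range.mpr (not_le.mp fun hle => ?_), by ring⟩⟩
  -- the occurrence of `s` that follows `k - t` would be a later one at or before `k`
  have hprev : C (k - ((t - cycleDist C (k - t) : ℕ) : ZMod N)) = s := by
    push_cast [Nat.cast_sub hle]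
    rw [← ht, ← apply_add_cycleDist C (k - t)]
    ring_nf
  have := Nat.sInf_le (s := {t : ℕ | C (k - t) = s}) hprev
  have := cycleDist_pos C (k - t)
  omega

-- The runs of the occurrences of `s` partition the cycle.
theorem sum_cycleDist_fiber [DecidableEq A] {s : A} (hs : ∃ j, C j = s) :
    ∑ j with C j = s, cycleDist C j = N := by
  have hcover : (univ.filter (C · = s)).biUnion (cycleRun C) = univ :=
    eq_univ_of_forall fun k => by
      obtain ⟨j, hj, hk⟩ := exists_mem_cycleRun hs k
      exact mem_biUnion.mpr ⟨j, by simpa using hj, hk⟩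
  have := card_biUnion (s := univ.filter (C · = s)) (t := cycleRun C) fun j hj j' hj' hne =>
    disjoint_cycleRun hne ((mem_filter.mp hj).2.trans (mem_filter.mp hj').2.symm)
  simpa [hcover, card_cycleRun] using this.symm

lemma mul_card_fiber_add_card_cycleDist_eq_succ [DecidableEq A] {s : A} (hs : ∃ j, C j = s) {a : ℕ}
    (h : ∀ j, C j = s → cycleDist C j = a ∨ cycleDist C j = a + 1) :
    a * #{j | C j = s} + #{j | C j = s ∧ cycleDist C j = a + 1} = N := by
  rw [← filter_filter, ← sum_eq_mul_card_add_card_filter fun j hj => h j (mem_filter.mp hj).2,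
    sum_cycleDist_fiber hs]

end cycleDist

section moments

variable {N : ℕ} [NeZero N] {A : Type*}

lemma cycleVariance_eq_cycleMoment2_sub_sq (C : ZMod N → A) :
    cycleVariance C = cycleMoment2 C - cycleMean C ^ 2 := by
  have hN : (N : ℚ) ≠ 0 := Nat.cast_ne_zero.mpr (NeZero.ne N)
  have hsum : ∑ j, (cycleDist C j : ℚ) = N * cycleMean C := by
    rw [cycleMean]; field_simp
  simp only [cycleVariance, cycleMoment2, sub_sq, sum_add_distrib, sum_sub_distrib, ← sum_mul,
    ← mul_sum, hsum, sum_const, card_univ, ZMod.card, nsmul_eq_mul]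
  field_simp
  ring

variable [Fintype A] [DecidableEq A] {C C' : ZMod N → A}

lemma Admissible.surjective {m : A → ℕ} (hC : Admissible m C) (hm : ∀ s, 0 < m s) :
    Function.Surjective C := fun s => by
  obtain ⟨j, hj⟩ := card_pos.mp ((hC s).symm ▸ hm s : 0 < #(univ.filter (C · = s)))
  exact ⟨j, (mem_filter.mp hj).2⟩

lemma sum_cycleDist_of_surjective (hC : Function.Surjective C) :
    ∑ j, cycleDist C j = Fintype.card A * N := by
  rw [← sum_fiberwise univ C (cycleDist C)]
  simp [sum_cycleDist_fiber (hC _)]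

lemma cycleMean_of_surjective (hC : Function.Surjective C) :
    cycleMean C = Fintype.card A := by
  rw [cycleMean, ← Nat.cast_sum, sum_cycleDist_of_surjective hC]
  field_simp [NeZero.ne N]
  push_cast
  ring

lemma cycleVariance_le_iff (hC : Function.Surjective C) (hC' : Function.Surjective C') :
    cycleVariance C ≤ cycleVariance C' ↔
      ∑ j, cycleDist C j ^ 2 ≤ ∑ j, cycleDist C' j ^ 2 := by
  have hN : (0 : ℚ) < N := Nat.cast_pos.mpr (Nat.pos_of_ne_zero (NeZero.ne N))
  rw [cycleVariance_eq_cycleMoment2_sub_sq, cycleVariance_eq_cycleMoment2_sub_sq,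
    cycleMean_of_surjective hC, cycleMean_of_surjective hC', sub_le_sub_iff_right,
    cycleMoment2, cycleMoment2, div_le_div_iff_of_pos_right hN]
  norm_cast

end moments

/-- The gap between `d ^ 2` and the secant of `x ↦ x ^ 2` through `a` and `a + 1`. -/
def sqExcess (a d : ℕ) : ℤ := ((d : ℤ) - a) * ((d : ℤ) - a - 1)

lemma sqExcess_nonneg (a d : ℕ) : 0 ≤ sqExcess a d := by
  unfold sqExcess
  rcases le_or_gt d a with h | h
  · have : (d : ℤ) ≤ a := by exact_mod_cast h
    nlinarith
  · have : (a : ℤ) + 1 ≤ d := by exact_mod_cast h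
    nlinarith

lemma sqExcess_eq_zero_iff {a d : ℕ} : sqExcess a d = 0 ↔ d = a ∨ d = a + 1 := by
  simp only [sqExcess, mul_eq_zero, sub_eq_zero, sub_sub]
  norm_cast

lemma sq_eq_sqExcess_add (a d : ℕ) :
    (d : ℤ) ^ 2 = sqExcess a d + ((2 * a + 1) * d - a * (a + 1)) := by
  unfold sqExcess
  ring

section profile

variable {N : ℕ} [NeZero N] {A : Type*} [Fintype A] [DecidableEq A] {m : A → ℕ}
  {C C' : ZMod N → A}

theorem sum_sq_cycleDist_eq (hm : ∀ s, 0 < m s) (hC : Admissible m C) (a : A → ℕ) :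
    ((∑ j, cycleDist C j ^ 2 : ℕ) : ℤ) = ∑ j, sqExcess (a (C j)) (cycleDist C j) +
      ∑ s, ((2 * a s + 1) * N - a s * (a s + 1) * m s : ℤ) := by
  push_cast
  rw [sum_congr rfl fun j _ => sq_eq_sqExcess_add (a (C j)) (cycleDist C j), sum_add_distrib]
  congr 1
  refine (sum_fiberwise univ C _).symm.trans (sum_congr rfl fun s _ => ?_)
  rw [sum_congr rfl fun j hj => by rw [(mem_filter.mp hj).2], sum_sub_distrib, ← mul_sum,
    ← Nat.cast_sum, sum_cycleDist_fiber (hC.surjective hm s), sum_const]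
  simp only [hC s, nsmul_eq_mul]
  ring

theorem cycleDist_eq_or_of_sum_sq_le (hm : ∀ s, 0 < m s) (hC : Admissible m C)
    (hC' : Admissible m C') (a : A → ℕ)
    (hprof : ∀ j, cycleDist C' j = a (C' j) ∨ cycleDist C' j = a (C' j) + 1)
    (hle : ∑ j, cycleDist C j ^ 2 ≤ ∑ j, cycleDist C' j ^ 2) (j : ZMod N) :
    cycleDist C j = a (C j) ∨ cycleDist C j = a (C j) + 1 := by
  have hzero' : ∑ j, sqExcess (a (C' j)) (cycleDist C' j) = 0 :=
    sum_eq_zero fun j _ => sqExcess_eq_zero_iff.mpr (hprof j)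
  have hle' := Nat.cast_le (α := ℤ) |>.mpr hle
  rw [sum_sq_cycleDist_eq hm hC a, sum_sq_cycleDist_eq hm hC' a, hzero'] at hle'
  have hzero : ∑ j, sqExcess (a (C j)) (cycleDist C j) = 0 :=
    le_antisymm (by linarith) (sum_nonneg fun j _ => sqExcess_nonneg _ _)
  exact sqExcess_eq_zero_iff.mp
    ((sum_eq_zero_iff_of_nonneg fun j _ => sqExcess_nonneg _ _).mp hzero j (mem_univ j))

end profile

section binary

variable {N : ℕ}

lemma cycleDist_le_two {C : ZMod N → Fin 2} (h : ∀ x, C x = 1 → 2 ≤ cycleDist C x)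
    {j : ZMod N} (hj : C j = 0) : cycleDist C j ≤ 2 := by
  by_cases h1 : C (j + (1 : ℕ)) = 0
  · exact (cycleDist_le C j one_pos (h1.trans hj.symm)).trans one_le_two
  · replace h1 : C (j + (1 : ℕ)) = 1 := by omega
    have h2 := apply_add_ne_of_lt_cycleDist C _ one_pos (h _ h1)
    refine cycleDist_le C j two_pos ?_
    rw [h1] at h2
    rw [hj, show j + ((2 : ℕ) : ZMod N) = j + (1 : ℕ) + (1 : ℕ) by push_cast; ring]
    omega

variable [NeZero N]

lemma admissible_fin_two {m₁ m₂ : ℕ} (hN : N = m₁ + m₂) {C : ZMod N → Fin 2}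
    (hC : #{x | C x = 1} = m₂) : Admissible ![m₁, m₂] C := by
  have hcompl := card_filter_add_card_filter_not (s := univ) (C · = 1)
  have h0 : univ.filter (fun x => ¬C x = 1) = univ.filter (C · = 0) :=
    filter_congr fun x _ => by omega
  rw [h0, hC, card_univ, ZMod.card] at hcompl
  intro a
  fin_cases a
  · simp only [Fin.zero_eta, Matrix.cons_val_zero]; omega
  · simpa using hC

end binary

lemma natCast_eq_iff_eq_val_of_lt {N n : ℕ} [NeZero N] (hn : n < N) {x : ZMod N} :
    (n : ZMod N) = x ↔ n = x.val :=
  ⟨fun h => h ▸ (ZMod.val_cast_of_lt hn).symm, fun h => h ▸ ZMod.natCast_zmod_val x⟩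

section placement

variable {N m : ℕ} {g : ℕ → ℕ}

def placeCycle (N m : ℕ) (g : ℕ → ℕ) (x : ZMod N) : Fin 2 :=
  if ∃ i < m, g i = x.val then 1 else 0

lemma placeCycle_eq_one_iff {x : ZMod N} : placeCycle N m g x = 1 ↔ ∃ i < m, g i = x.val := by
  unfold placeCycle
  split_ifs with h <;> simp [h]

variable [NeZero N] (hg : StrictMono g) (hgm : g m = N)
include hg hgm

lemma card_placeCycle_eq_one : #{x | placeCycle N m g x = 1} = m := by
  have himage : univ.filter (placeCycle N m g · = 1) = (range m).image fun i => (g i : ZMod N) := by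
    ext x
    simp only [mem_filter, mem_univ, true_and, placeCycle_eq_one_iff, mem_image, mem_range]
    exact exists_congr fun i => and_congr_right fun hi =>
      (natCast_eq_iff_eq_val_of_lt (hgm ▸ hg hi)).symm
  rw [himage, card_image_of_injOn, card_range]
  intro i hi i' hi' h
  have := (natCast_eq_iff_eq_val_of_lt (hgm ▸ hg (mem_range.mp hi))).mp h
  rw [ZMod.val_cast_of_lt (hgm ▸ hg (mem_range.mp hi'))] at this
  exact hg.injective this

lemma cycleDist_placeCycle (hg0 : g 0 = 0) {i : ℕ} (hi : i < m) :
    cycleDist (placeCycle N m g) (g i) = g (i + 1) - g i := by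
  have hmono : g i < g (i + 1) := hg (Nat.lt_succ_self i)
  have hat : placeCycle N m g (g i) = 1 :=
    placeCycle_eq_one_iff.mpr ⟨i, hi, (natCast_eq_iff_eq_val_of_lt (hgm ▸ hg hi)).mp rfl⟩
  apply cycleDist_eq_of_forall_ne _ _ (Nat.sub_pos_of_lt hmono)
  · rw [hat, ← Nat.cast_add, Nat.add_sub_cancel' hmono.le, placeCycle_eq_one_iff]
    rcases (show i + 1 ≤ m from hi).lt_or_eq with hlt | heq
    · exact ⟨i + 1, hlt, (natCast_eq_iff_eq_val_of_lt (hgm ▸ hg hlt)).mp rfl⟩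
    · rw [heq, hgm]
      exact ⟨0, by omega, by simp [hg0]⟩
  · intro e he hed
    rw [hat, ne_eq, placeCycle_eq_one_iff, not_exists]
    rintro k ⟨hk, hgk⟩
    have hN : g (i + 1) ≤ N := hgm ▸ hg.monotone (Nat.succ_le_of_lt hi)
    rw [← Nat.cast_add, ZMod.val_cast_of_lt (by omega)] at hgk
    have h1 := hg.lt_iff_lt.mp (show g i < g k by omega)
    have h2 := hg.lt_iff_lt.mp (show g k < g (i + 1) by omega)
    omega

end placement

/-- Positions at which `m` copies of a symbol, `r` of them followed by a gap of `ℓ + 1` and the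
others by a gap of `ℓ`, fill a cycle of length `m * ℓ + r`. -/
def balancedPos (ℓ r i : ℕ) : ℕ := i * ℓ + min i r

lemma balancedPos_succ (ℓ r i : ℕ) :
    balancedPos ℓ r (i + 1) = balancedPos ℓ r i + ℓ + if i < r then 1 else 0 := by
  unfold balancedPos
  split_ifs <;> rw [add_mul, one_mul] <;> omega

lemma strictMono_balancedPos {ℓ : ℕ} (hℓ : 0 < ℓ) (r : ℕ) : StrictMono (balancedPos ℓ r) :=
  strictMono_nat_of_lt_succ fun i => by rw [balancedPos_succ]; omega

abbrev balancedCycle (N m ℓ r : ℕ) : ZMod N → Fin 2 := placeCycle N m (balancedPos ℓ r)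

section balanced

variable {N m ℓ r : ℕ} [NeZero N] (hN : N = m * ℓ + r) (hr : r ≤ m) (hℓ : 2 ≤ ℓ)
include hN hr hℓ

lemma admissible_balanced {m₁ : ℕ} (hN₁ : N = m₁ + m) :
    Admissible ![m₁, m] (balancedCycle N m ℓ r) :=
  admissible_fin_two hN₁ <| card_placeCycle_eq_one (strictMono_balancedPos (by omega) r)
    (by simp [balancedPos, min_eq_right hr, hN])

theorem cycleDist_balanced_eq_or (j : ZMod N) :
    cycleDist (balancedCycle N m ℓ r) j = ![1, ℓ] (balancedCycle N m ℓ r j) ∨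
      cycleDist (balancedCycle N m ℓ r) j = ![1, ℓ] (balancedCycle N m ℓ r j) + 1 := by
  set C := balancedCycle N m ℓ r
  have hg := strictMono_balancedPos (by omega : 0 < ℓ) r
  have hgm : balancedPos ℓ r m = N := by simp [balancedPos, min_eq_right hr, hN]
  have hone : ∀ x, C x = 1 → cycleDist C x = ℓ ∨ cycleDist C x = ℓ + 1 := by
    intro x hx
    obtain ⟨i, hi, hgi⟩ := placeCycle_eq_one_iff.mp hx
    rw [← (natCast_eq_iff_eq_val_of_lt (hgm ▸ hg hi)).mpr hgi,
      cycleDist_placeCycle hg hgm (by simp [balancedPos]) hi, balancedPos_succ]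
    split_ifs <;> omega
  by_cases h1 : C j = 1
  · simpa [h1] using hone j h1
  · have h0 : C j = 0 := by omega
    have := cycleDist_le_two (fun x hx => by rcases hone x hx with h | h <;> omega) h0
    have := cycleDist_pos C j
    simp only [h0, Matrix.cons_val_zero]
    omega

end balanced

/-- Necessity of the Euclidean distance profile for variance minimality: any
variance-minimizing admissible binary cycle has every instance of `a₁` at distance 1 or 2
(with exactly `m₁ − m₂` at distance 1 and `m₂` at distance 2), every instance of `a₂` at
distance `ℓ = ⌊N/m₂⌋` or `u = ⌈N/m₂⌉`; in particular `a₂` is unclustered. -/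
theorem necessity_euclid_profile (m₁ m₂ : ℕ) (h2 : 1 ≤ m₂) (h12 : m₂ ≤ m₁)
    (N : ℕ) (hN : N = m₁ + m₂) [NeZero N]
    (ℓ u : ℕ) (hℓ : ℓ = N / m₂) (hu : u = (N + m₂ - 1) / m₂)
    (C : ZMod N → Fin 2) (hC : Admissible ![m₁, m₂] C)
    (hmin : ∀ C' : ZMod N → Fin 2, Admissible ![m₁, m₂] C' →
      cycleVariance C ≤ cycleVariance C') :
    (∀ j : ZMod N, C j = 0 → cycleDist C j = 1 ∨ cycleDist C j = 2) ∧
    (Finset.univ.filter (fun j => C j = 0 ∧ cycleDist C j = 1)).card = m₁ - m₂ ∧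
    (Finset.univ.filter (fun j => C j = 0 ∧ cycleDist C j = 2)).card = m₂ ∧
    (∀ j : ZMod N, C j = 1 → cycleDist C j = ℓ ∨ cycleDist C j = u) ∧
    (∀ j : ZMod N, C j = 1 → 1 < cycleDist C j) := by
  obtain ⟨r, hNr, hr⟩ : ∃ r, N = m₂ * ℓ + r ∧ r < m₂ :=
    ⟨N % m₂, hℓ ▸ (Nat.div_add_mod N m₂).symm, Nat.mod_lt _ h2⟩
  have hℓ2 : 2 ≤ ℓ := hℓ ▸ (Nat.le_div_iff_mul_le h2).mpr (by omega)
  have hm : ∀ s, 0 < ![m₁, m₂] s := fun s => by fin_cases s <;> simp <;> omega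
  have hC' := admissible_balanced hNr hr.le hℓ2 hN
  have hle := (cycleVariance_le_iff (hC.surjective hm) (hC'.surjective hm)).mp (hmin _ hC')
  have hprof := cycleDist_eq_or_of_sum_sq_le hm hC hC' ![1, ℓ]
    (cycleDist_balanced_eq_or hNr hr.le hℓ2) hle
  have h0 : ∀ j, C j = 0 → cycleDist C j = 1 ∨ cycleDist C j = 2 :=
    fun j hj => by simpa [hj] using hprof j
  have h1 : ∀ j, C j = 1 → cycleDist C j = ℓ ∨ cycleDist C j = ℓ + 1 :=
    fun j hj => by simpa [hj] using hprof j
  have hcard₀ := mul_card_fiber_add_card_cycleDist_eq_succ (hC.surjective hm 0) h0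
  have hcard₁ := mul_card_fiber_add_card_cycleDist_eq_succ (hC.surjective hm 1) h1
  have hsplit₀ := card_filter_add_card_filter_succ (S := {j | C j = 0})
    fun j hj => h0 j (mem_filter.mp hj).2
  simp only [filter_filter, hC 0, hC 1, Matrix.cons_val_zero, Matrix.cons_val_one, one_mul,
    Nat.reduceAdd, mul_comm ℓ] at hcard₀ hcard₁ hsplit₀
  refine ⟨h0, by omega, by omega, fun j hj => ?_,
    fun j hj => by rcases h1 j hj with h | h <;> omega⟩
  rcases h1 j hj with h | h
  · exact Or.inl h
  · have : 0 < r := by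
      have : 0 < #{j | C j = 1 ∧ cycleDist C j = ℓ + 1} := card_pos.mpr ⟨j, by simp [hj, h]⟩
      omega
    exact Or.inr (h.trans (hu ▸ Nat.div_eq_of_lt_le (by grind) (by grind)).symm)
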